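/- arXiv:2311.09548 — 3 statements merged into one kernel-verified Lean document; each statement's English description precedes it below -/
import Mathlib

section
/- For any connected graph G, any positive integer k, and any real α ≥ 1, the neighborhood quality satisfies NQ_{αk}(G) ≤ 6√α · NQ_k(G). -/
/-- The ball of hop-radius `t` around `v` in `G`. -/
def ballSet {V : Type*} (G : SimpleGraph V) (v : V) (t : ℕ) : Set V :=
  {w | G.dist v w ≤ t}

/-- The (hop) diameter of `G`. -/
noncomputable def gDiam {V : Type*} (G : SimpleGraph V) : ℕ :=
  sSup (Set.range fun p : V × V => G.dist p.1 p.2)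

/-- The neighborhood quality of a vertex: `NQ_k(v) = min ({t : |B_t(v)| ≥ k/t} ∪ {D})`,
where `t` ranges over positive integers. -/
noncomputable def NQv {V : Type*} (G : SimpleGraph V) (k : ℕ) (v : V) : ℕ :=
  sInf ({t | 0 < t ∧ (k : ℝ) ≤ (t : ℝ) * (ballSet G v t).ncard} ∪ {gDiam G})

/-- The neighborhood quality of a graph: `NQ_k(G) = max_v NQ_k(v)`. -/
noncomputable def NQ {V : Type*} (G : SimpleGraph V) (k : ℕ) : ℕ :=
  sSup (Set.range (NQv G k))

private lemma walk_aux {V : Type*} {G : SimpleGraph V} (hG : G.Connected) :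
    ∀ {v w : V} (p : G.Walk v w) (d : ℕ), d ≤ p.length →
      ∃ u, G.dist v u ≤ d ∧ G.dist u w ≤ p.length - d := by
  intro v w p
  induction p with
  | nil =>
    rename_i x
    intro d _
    exact ⟨x, by simp [SimpleGraph.dist_self], by simp [SimpleGraph.dist_self]⟩
  | @cons a b c h q ih =>
    intro d hd
    cases d with
    | zero =>
      exact ⟨a, by simp [SimpleGraph.dist_self], SimpleGraph.dist_le _⟩
    | succ d =>
      obtain ⟨u, h1, h2⟩ := ih d (by simpa using hd)
      refine ⟨u, ?_, by simpa using h2⟩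
      have hab : G.dist a b = 1 := SimpleGraph.dist_eq_one_iff_adj.mpr h
      have htri := hG.dist_triangle (u := a) (v := b) (w := u)
      omega

private lemma exists_dist_eq' {V : Type*} {G : SimpleGraph V} (hG : G.Connected) (v w : V)
    (d : ℕ) (hd : d ≤ G.dist v w) : ∃ u, G.dist v u = d := by
  obtain ⟨p, hp⟩ := hG.exists_walk_length_eq_dist v w
  obtain ⟨u, h1, h2⟩ := walk_aux hG p d (by omega)
  refine ⟨u, le_antisymm h1 ?_⟩
  have htri := hG.dist_triangle (u := v) (v := u) (w := w)
  omega

private lemma sum_ncard_le' {V : Type*} [Fintype V] :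
    ∀ (s : ℕ) (S : ℕ → Set V) (B : Set V), (∀ i, i < s → S i ⊆ B) →
      (∀ i j, i < j → j < s → Disjoint (S i) (S j)) →
      ∑ i ∈ Finset.range s, (S i).ncard ≤ B.ncard := by
  intro s
  induction s with
  | zero => intro S B _ _; simp
  | succ n ih =>
    intro S B hsub hdisj
    rw [Finset.sum_range_succ]
    have h1 : ∑ i ∈ Finset.range n, (S i).ncard ≤ (B \ S n).ncard := by
      apply ih
      · intro i hi
        exact Set.subset_diff.mpr ⟨hsub i (by omega), hdisj i n hi (by omega)⟩
      · intro i j hij hj; exact hdisj i j hij (by omega)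
    have h2 := Set.ncard_diff_add_ncard_of_subset (hsub n (by omega)) (Set.toFinite B)
    omega

private lemma NQv_le_gDiam {V : Type*} (G : SimpleGraph V) (m : ℕ) (u : V) :
    NQv G m u ≤ gDiam G := by
  unfold NQv
  exact Nat.sInf_le (Or.inr rfl)

private lemma NQv_le_of {V : Type*} (G : SimpleGraph V) (m : ℕ) (u : V) (t' : ℕ)
    (h1 : 0 < t') (h2 : (m : ℝ) ≤ (t' : ℝ) * ((ballSet G u t').ncard : ℝ)) :
    NQv G m u ≤ t' := by
  unfold NQv
  exact Nat.sInf_le (Or.inl ⟨h1, h2⟩)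

private lemma NQv_spec {V : Type*} (G : SimpleGraph V) (m : ℕ) (u : V) :
    NQv G m u = gDiam G ∨
      (0 < NQv G m u ∧ (m : ℝ) ≤ (NQv G m u : ℝ) * ((ballSet G u (NQv G m u)).ncard : ℝ)) := by
  have h := Nat.sInf_mem
    (⟨gDiam G, Or.inr rfl⟩ :
      ({t : ℕ | 0 < t ∧ (m : ℝ) ≤ (t : ℝ) * ((ballSet G u t).ncard : ℝ)} ∪ {gDiam G}).Nonempty)
  unfold NQv
  rcases h with h | h
  · exact Or.inr h
  · exact Or.inl h

set_option maxHeartbeats 1600000 in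
theorem stmt4 {V : Type*} [Fintype V] (G : SimpleGraph V) (hG : G.Connected)
    (k : ℕ) (hk : 0 < k) (α : ℝ) (hα : 1 ≤ α)
    (k' : ℕ) (hk' : (k' : ℝ) = α * k) :
    (NQ G k' : ℝ) ≤ 6 * Real.sqrt α * (NQ G k : ℝ) := by
  classical
  have hV : Nonempty V := hG.nonempty
  set N := NQ G k with hN
  set D := gDiam G with hD
  have hα0 : (0:ℝ) < α := by linarith
  have hsq : Real.sqrt α * Real.sqrt α = α := Real.mul_self_sqrt (le_of_lt hα0)
  have hsqrt1 : 1 ≤ Real.sqrt α := by nlinarith [Real.sqrt_nonneg α]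
  have hNQ_le_diam : ∀ m : ℕ, NQ G m ≤ D := fun m => by
    apply csSup_le (Set.range_nonempty _)
    rintro _ ⟨u, rfl⟩; exact NQv_le_gDiam G m u
  have hNQv_le : ∀ u : V, NQv G k u ≤ N :=
    fun u => le_csSup (Set.finite_range _).bddAbove ⟨u, rfl⟩
  by_cases hcase : (D : ℝ) ≤ 6 * Real.sqrt α * N
  · calc (NQ G k' : ℝ) ≤ D := by exact_mod_cast hNQ_le_diam k'
      _ ≤ _ := hcase
  push_neg at hcase
  have hN1 : 1 ≤ N := by
    by_contra hcon
    have hN0 : N = 0 := by omega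
    have hD0 : (0:ℝ) < D := by rw [hN0] at hcase; simpa using hcase
    have hD0' : 0 < D := by exact_mod_cast hD0
    obtain ⟨v⟩ := hV
    have h1 : NQv G k v ≤ N := hNQv_le v
    rcases NQv_spec G k v with heq | ⟨hpos, _⟩
    · rw [← hD] at heq; omega
    · omega
  have hN0R : (1:ℝ) ≤ (N:ℝ) := by exact_mod_cast hN1
  have hND : N < D := by
    have h6 : (N:ℝ) ≤ 6 * Real.sqrt α * N := by nlinarith
    have : (N:ℝ) < D := lt_of_le_of_lt h6 hcase
    exact_mod_cast this
  have hext : ∀ u : V, ∃ t : ℕ, 0 < t ∧ t ≤ N ∧ (k:ℝ) ≤ (t:ℝ) * ((ballSet G u t).ncard : ℝ) := by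
    intro u
    have h1 : NQv G k u ≤ N := hNQv_le u
    rcases NQv_spec G k u with heq | ⟨h3, h4⟩
    · exfalso; rw [← hD] at heq; omega
    · exact ⟨NQv G k u, h3, h1, h4⟩
  choose t ht1 ht2 ht3 using hext
  have hDmem : ∃ a b : V, G.dist a b = D := by
    have : D ∈ Set.range (fun p : V × V => G.dist p.1 p.2) :=
      Set.Nonempty.csSup_mem (Set.range_nonempty _) (Set.finite_range _)
    obtain ⟨⟨a, b⟩, hab⟩ := this
    exact ⟨a, b, hab⟩
  have hfar : ∀ v : V, ∃ w, D ≤ 2 * G.dist v w := by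
    intro v
    obtain ⟨a, b, hab⟩ := hDmem
    have htri := hG.dist_triangle (u := a) (v := v) (w := b)
    have hca : G.dist a v = G.dist v a := SimpleGraph.dist_comm
    rcases le_total (G.dist a v) (G.dist v b) with h | h
    · exact ⟨b, by omega⟩
    · exact ⟨a, by omega⟩
  set s : ℕ := ⌈Real.sqrt α⌉₊ with hs
  have hs1 : 1 ≤ s := by
    rw [hs]; exact Nat.one_le_ceil_iff.mpr (by linarith)
  have hs_ge : Real.sqrt α ≤ (s:ℝ) := Nat.le_ceil _
  have hs_lt : (s:ℝ) < Real.sqrt α + 1 := Nat.ceil_lt_add_one (Real.sqrt_nonneg α)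
  set R : ℕ := (s-1) * (2*N+1) + N with hR
  have hRcast : (R:ℝ) = ((s:ℝ) - 1) * (2*(N:ℝ)+1) + N := by
    rw [hR]
    push_cast [Nat.cast_sub hs1]
    ring
  have hR_le : (R:ℝ) ≤ 6 * Real.sqrt α * N := by
    rw [hRcast]
    nlinarith [Real.sqrt_nonneg α]
  have hRpos : 0 < R := by positivity
  have hlen_real : (((s-1) * (2*N+1) : ℕ) : ℝ) * 2 < (D:ℝ) := by
    have h1 : (((s-1) * (2*N+1) : ℕ) : ℝ) = ((s:ℝ) - 1) * (2*(N:ℝ)+1) := by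
      push_cast [Nat.cast_sub hs1]; ring
    rw [h1]
    nlinarith [Real.sqrt_nonneg α]
  have hmain : ∀ v : V, NQv G k' v ≤ R := by
    intro v
    obtain ⟨w, hw⟩ := hfar v
    have hlen : (s-1) * (2*N+1) ≤ G.dist v w := by
      have h2 : (((s-1) * (2*N+1) : ℕ) : ℝ) * 2 < ((2 * G.dist v w : ℕ) : ℝ) := by
        refine hlen_real.trans_le ?_
        exact_mod_cast hw
      have h3 : ((s-1) * (2*N+1)) * 2 < 2 * G.dist v w := by exact_mod_cast h2
      omega
    have hc : ∀ i : ℕ, i < s → ∃ u : V, G.dist v u = i * (2*N+1) := by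
      intro i hi
      apply exists_dist_eq' hG v w
      calc i * (2*N+1) ≤ (s-1) * (2*N+1) := Nat.mul_le_mul_right _ (by omega)
        _ ≤ G.dist v w := hlen
    have hcex : ∃ c : ℕ → V, ∀ i : ℕ, i < s → G.dist v (c i) = i * (2*N+1) := by
      refine ⟨fun i => if h : i < s then (hc i h).choose else v, fun i hi => ?_⟩
      simp only [dif_pos hi]
      exact (hc i hi).choose_spec
    obtain ⟨c, hcdist⟩ := hcex
    set S : ℕ → Set V := fun i => ballSet G (c i) (t (c i)) with hSdef
    have hsub : ∀ i, i < s → S i ⊆ ballSet G v R := by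
      intro i hi x hx
      have hx' : G.dist (c i) x ≤ t (c i) := hx
      have htri := hG.dist_triangle (u := v) (v := c i) (w := x)
      have h1 := hcdist i hi
      have h2 := ht2 (c i)
      have h3 : i * (2*N+1) ≤ (s-1) * (2*N+1) := Nat.mul_le_mul_right _ (by omega)
      show G.dist v x ≤ R
      rw [hR]; omega
    have hdisj : ∀ i j, i < j → j < s → Disjoint (S i) (S j) := by
      intro i j hij hj
      rw [Set.disjoint_left]
      intro x hxi hxj
      have hxi' : G.dist (c i) x ≤ t (c i) := hxi
      have hxj' : G.dist (c j) x ≤ t (c j) := hxj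
      have h1 := hcdist i (by omega)
      have h2 := hcdist j hj
      have htri1 := hG.dist_triangle (u := v) (v := c i) (w := c j)
      have htri2 := hG.dist_triangle (u := c i) (v := x) (w := c j)
      have hcm : G.dist x (c j) = G.dist (c j) x := SimpleGraph.dist_comm
      have h3 := ht2 (c i)
      have h4 := ht2 (c j)
      have h5 : j * (2*N+1) ≤ i * (2*N+1) + 2 * N := by omega
      have hsu : i + 1 ≤ j := hij
      have h6 : (i+1) * (2*N+1) ≤ j * (2*N+1) := Nat.mul_le_mul_right _ hsu
      have h7 : (i+1) * (2*N+1) = i * (2*N+1) + (2*N+1) := by ring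
      omega
    have hcount : ∑ i ∈ Finset.range s, (S i).ncard ≤ (ballSet G v R).ncard :=
      sum_ncard_le' s S (ballSet G v R) hsub hdisj
    have hsum : (s:ℝ) * k ≤ (N:ℝ) * ((ballSet G v R).ncard : ℝ) := by
      have h1 : ∀ i ∈ Finset.range s, (k:ℝ) ≤ (N:ℝ) * ((S i).ncard : ℝ) := by
        intro i _
        have h2 := ht3 (c i)
        have h3 : ((t (c i)):ℝ) ≤ (N:ℝ) := by exact_mod_cast ht2 (c i)
        have h4 : (0:ℝ) ≤ ((S i).ncard : ℝ) := by positivity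
        nlinarith
      calc (s:ℝ) * k = ∑ _i ∈ Finset.range s, (k:ℝ) := by
            rw [Finset.sum_const, Finset.card_range]; ring
        _ ≤ ∑ i ∈ Finset.range s, (N:ℝ) * ((S i).ncard : ℝ) := Finset.sum_le_sum h1
        _ = (N:ℝ) * ((∑ i ∈ Finset.range s, (S i).ncard : ℕ) : ℝ) := by
            rw [← Finset.mul_sum]; push_cast; ring
        _ ≤ (N:ℝ) * ((ballSet G v R).ncard : ℝ) := by
            have h5 : ((∑ i ∈ Finset.range s, (S i).ncard : ℕ) : ℝ)
                ≤ ((ballSet G v R).ncard : ℝ) := by exact_mod_cast hcount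
            have h6 : (0:ℝ) ≤ (N:ℝ) := by positivity
            exact mul_le_mul_of_nonneg_left h5 h6
    have hRs : α * (N:ℝ) ≤ (R:ℝ) * (s:ℝ) := by
      rcases eq_or_lt_of_le hs1 with h1 | h2
      · have hs1' : (s:ℝ) = 1 := by exact_mod_cast h1.symm
        have hα1 : α ≤ 1 := by nlinarith
        have hα1' : α = 1 := le_antisymm hα1 hα
        rw [hα1', hRcast, hs1']
        nlinarith
      · have hs2 : (2:ℝ) ≤ (s:ℝ) := by exact_mod_cast h2
        rw [hRcast]
        nlinarith
    have hk'le : (k':ℝ) ≤ (R:ℝ) * ((ballSet G v R).ncard : ℝ) := by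
      rw [hk']
      have hk0 : (0:ℝ) ≤ (k:ℝ) := by positivity
      have hR0 : (0:ℝ) ≤ (R:ℝ) := by positivity
      nlinarith
    exact NQv_le_of G k' v R hRpos hk'le
  have hfin : NQ G k' ≤ R := by
    apply csSup_le (Set.range_nonempty _)
    rintro _ ⟨u, rfl⟩; exact hmain u
  calc (NQ G k' : ℝ) ≤ (R:ℝ) := by exact_mod_cast hfin
    _ ≤ 6 * Real.sqrt α * N := hR_le
end

section
/- Let G be the cycle graph on n vertices with diameter D = ⌊n/2⌋, let v be any vertex, and let k be a positive integer. If k ≤ 2D² + D, then NQ_k(v) equals the smallest positive integer t satisfying 2t² + t ≥ k; otherwise NQ_k(v) = D. -/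
open SimpleGraph
open Fin.CommRing

lemma cyc_conn {n : ℕ} (hn : 2 ≤ n) : (cycleGraph n).Connected := by
  obtain ⟨m, rfl⟩ := Nat.exists_eq_add_of_le hn
  have : 2 + m = m + 1 + 1 := by omega
  rw [this]
  exact cycleGraph_connected

lemma cyc_adj_succ {n : ℕ} [NeZero n] (hn : 2 ≤ n) (u : Fin n) : (cycleGraph n).Adj u (u + 1) := by
  rw [cycleGraph_adj']
  right
  rw [show u + 1 - u = 1 by ring, Fin.val_one']
  exact Nat.mod_eq_of_lt (by omega)

lemma cyc_dist_le_cast {n : ℕ} [NeZero n] (hn : 2 ≤ n) (v : Fin n) (m : ℕ) :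
    (cycleGraph n).dist v (v + (m : Fin n)) ≤ m := by
  induction m with
  | zero => simp
  | succ m ih =>
    have hadj := cyc_adj_succ hn (v + (m : Fin n))
    rw [show ((m + 1 : ℕ) : Fin n) = (m : Fin n) + 1 by push_cast; ring, ← add_assoc]
    calc (cycleGraph n).dist v (v + (m:Fin n) + 1)
        ≤ (cycleGraph n).dist v (v + (m:Fin n)) + (cycleGraph n).dist (v + (m:Fin n)) (v + (m:Fin n) + 1) :=
          (cyc_conn hn).dist_triangle
      _ ≤ m + 1 := by
          have := (dist_eq_one_iff_adj (G := cycleGraph n)).mpr hadj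
          omega

lemma cyc_walk_lb {n : ℕ} [NeZero n] (hn : 2 ≤ n) {u w : Fin n}
    (p : (cycleGraph n).Walk u w) : min (w - u).val (n - (w - u).val) ≤ p.length := by
  induction p with
  | nil => simp
  | @cons u x w h p ih =>
    rw [Walk.length_cons]
    have hb : (w - x).val < n := (w - x).isLt
    have hkey : min (w - u).val (n - (w - u).val) ≤ min (w - x).val (n - (w - x).val) + 1 := by
      rcases cycleGraph_adj'.mp h with h1 | h1
      · -- (u - x).val = 1, w - u = (w - x) - (u - x)
        have he : w - u = (w - x) - (u - x) := by ring
        have hval : (w - u).val = (n - 1 + (w - x).val) % n := by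
          rw [he, Fin.sub_def, h1]
        rcases Nat.eq_zero_or_pos (w - x).val with h0 | h0
        · rw [hval, h0, Nat.add_zero, Nat.mod_eq_of_lt (by omega)]
          omega
        · have : n - 1 + (w - x).val = n + ((w - x).val - 1) := by omega
          rw [hval, this, Nat.add_mod_left, Nat.mod_eq_of_lt (by omega)]
          omega
      · -- (x - u).val = 1, w - u = (w - x) + (x - u)
        have he : w - u = (w - x) + (x - u) := by ring
        have hval : (w - u).val = ((w - x).val + 1) % n := by
          rw [he, Fin.add_def, h1]
        rcases Nat.lt_or_ge ((w - x).val + 1) n with h2 | h2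
        · rw [hval, Nat.mod_eq_of_lt h2]; omega
        · have : (w - x).val + 1 = n := by omega
          rw [hval, this, Nat.mod_self]; omega
    omega

lemma cyc_dist_eq {n : ℕ} [NeZero n] (hn : 2 ≤ n) (v w : Fin n) :
    (cycleGraph n).dist v w = min (w - v).val (n - (w - v).val) := by
  apply le_antisymm
  · apply le_min
    · have := cyc_dist_le_cast hn v (w - v).val
      rwa [Fin.cast_val_eq_self, add_sub_cancel] at this
    · rcases eq_or_ne w v with rfl | hne
      · rw [SimpleGraph.dist_self]; omega
      · have hd : (v - w).val = n - (w - v).val := by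
          have : v - w = 0 - (w - v) := by ring
          rw [this, Fin.sub_def]
          simp only [Fin.val_zero, Nat.add_zero]
          have h1 : (w - v).val ≠ 0 := by
            intro h0
            apply hne
            have : w - v = 0 := Fin.ext (by simpa using h0)
            have := sub_eq_zero.mp this
            exact this
          have h2 : (w - v).val < n := (w - v).isLt
          exact Nat.mod_eq_of_lt (by omega)
        have := cyc_dist_le_cast hn w (v - w).val
        rw [Fin.cast_val_eq_self, add_sub_cancel] at this
        rw [SimpleGraph.dist_comm]
        omega
  · obtain ⟨p, hp⟩ := (cyc_conn hn).exists_walk_length_eq_dist v w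
    rw [← hp]
    exact cyc_walk_lb hn p


lemma cyc_diam {n : ℕ} [NeZero n] (hn : 2 ≤ n) : gDiam (cycleGraph n) = n / 2 := by
  have hub : ∀ p : Fin n × Fin n, (cycleGraph n).dist p.1 p.2 ≤ n / 2 := by
    intro p
    rw [cyc_dist_eq hn]
    have := (p.2 - p.1).isLt
    omega
  apply le_antisymm
  · exact csSup_le ⟨_, ⟨((0 : Fin n), (0 : Fin n)), rfl⟩⟩ (by rintro x ⟨p, rfl⟩; exact hub p)
  · apply le_csSup ⟨n / 2, by rintro x ⟨p, rfl⟩; exact hub p⟩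
    refine ⟨((0 : Fin n), ((n / 2 : ℕ) : Fin n)), ?_⟩
    show (cycleGraph n).dist 0 ((n / 2 : ℕ) : Fin n) = n / 2
    rw [cyc_dist_eq hn, sub_zero, Fin.val_natCast, Nat.mod_eq_of_lt (by omega)]
    omega

lemma cyc_ball_ncard {n : ℕ} [NeZero n] (v : Fin n) {t : ℕ} (ht : 0 < t)
    (htn : 2 * t + 1 ≤ n) :
    (ballSet (SimpleGraph.cycleGraph n) v t).ncard = 2 * t + 1 := by
  have hn : 2 ≤ n := by omega
  have hA : ballSet (cycleGraph n) v t =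
      (fun a => v + a) '' {a : Fin n | min a.val (n - a.val) ≤ t} := by
    ext w
    simp only [ballSet, Set.mem_setOf_eq, Set.mem_image, cyc_dist_eq hn]
    constructor
    · intro h
      exact ⟨w - v, h, by ring⟩
    · rintro ⟨a, ha, rfl⟩
      rwa [add_sub_cancel_left]
  rw [hA, Set.ncard_image_of_injective _ (add_right_injective v)]
  have hF : {a : Fin n | min a.val (n - a.val) ≤ t} =
      ↑(Finset.Iic (⟨t, by omega⟩ : Fin n) ∪ Finset.Ici (⟨n - t, by omega⟩ : Fin n)) := by
    ext a
    have := a.isLt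
    simp only [Set.mem_setOf_eq, Finset.coe_union, Set.mem_union, Finset.mem_coe,
      Finset.mem_Iic, Finset.mem_Ici, Fin.le_def]
    omega
  rw [hF, Set.ncard_coe_finset, Finset.card_union_of_disjoint, Fin.card_Iic, Fin.card_Ici]
  · simp only [Fin.val_mk]; omega
  · rw [Finset.disjoint_left]
    intro a ha ha'
    rw [Finset.mem_Iic, Fin.le_def] at ha
    rw [Finset.mem_Ici, Fin.le_def] at ha'
    simp only [Fin.val_mk] at ha ha'
    omega

theorem stmt8 (n k : ℕ) (hn : 3 ≤ n) (hk : 0 < k) (v : Fin n) :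
    (k ≤ 2 * (n / 2) ^ 2 + n / 2 →
      NQv (SimpleGraph.cycleGraph n) k v =
        sInf {t : ℕ | 0 < t ∧ k ≤ 2 * t ^ 2 + t}) ∧
    (2 * (n / 2) ^ 2 + n / 2 < k →
      NQv (SimpleGraph.cycleGraph n) k v = n / 2) := by
  haveI : NeZero n := ⟨by omega⟩
  have hn2 : 2 ≤ n := by omega
  have hD : gDiam (cycleGraph n) = n / 2 := cyc_diam hn2
  have hD1 : 1 ≤ n / 2 := by omega
  have hcond : ∀ t : ℕ, 0 < t → t < n / 2 →
      (((k : ℝ) ≤ (t : ℝ) * (ballSet (cycleGraph n) v t).ncard) ↔ k ≤ 2 * t ^ 2 + t) := by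
    intro t ht htD
    rw [cyc_ball_ncard v ht (by omega),
      show (t : ℝ) * ((2 * t + 1 : ℕ) : ℝ) = ((2 * t ^ 2 + t : ℕ) : ℝ) by push_cast; ring]
    exact Nat.cast_le
  constructor
  · intro hk2
    have hDT : n / 2 ∈ {t : ℕ | 0 < t ∧ k ≤ 2 * t ^ 2 + t} := ⟨hD1, hk2⟩
    have ht0mem := Nat.sInf_mem (⟨_, hDT⟩ : {t : ℕ | 0 < t ∧ k ≤ 2 * t ^ 2 + t}.Nonempty)
    have ht0le : sInf {t : ℕ | 0 < t ∧ k ≤ 2 * t ^ 2 + t} ≤ n / 2 := Nat.sInf_le hDT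
    unfold NQv
    apply le_antisymm
    · apply Nat.sInf_le
      rcases lt_or_eq_of_le ht0le with h | h
      · exact Or.inl ⟨ht0mem.1, (hcond _ ht0mem.1 h).mpr ht0mem.2⟩
      · exact Or.inr (by rw [Set.mem_singleton_iff, h, hD])
    · refine le_csInf ⟨gDiam (SimpleGraph.cycleGraph n), Or.inr rfl⟩ ?_
      intro s hs
      rw [Set.mem_union, Set.mem_setOf_eq, Set.mem_singleton_iff] at hs
      rcases hs with ⟨hs1, hs2⟩ | hs
      · rcases Nat.lt_or_ge s (n / 2) with h | h
        · exact Nat.sInf_le ⟨hs1, (hcond s hs1 h).mp hs2⟩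
        · omega
      · rw [hD] at hs
        omega
  · intro hk2
    unfold NQv
    apply le_antisymm
    · exact Nat.sInf_le (Or.inr (by rw [Set.mem_singleton_iff, hD]))
    · refine le_csInf ⟨gDiam (SimpleGraph.cycleGraph n), Or.inr rfl⟩ ?_
      intro s hs
      rw [Set.mem_union, Set.mem_setOf_eq, Set.mem_singleton_iff] at hs
      rcases hs with ⟨hs1, hs2⟩ | hs
      · by_contra hcon
        push_neg at hcon
        have h : s < n / 2 := hcon
        have hks := (hcond s hs1 h).mp hs2
        have : s ^ 2 ≤ (n / 2) ^ 2 := Nat.pow_le_pow_left (by omega) 2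
        omega
      · rw [hD] at hs
        omega
end

section
/- Let T be a rooted tree with maximum degree c and depth d, and let U be any subset of the vertices of T. Then there exists a rooted tree T' on vertex set U with depth at most d and maximum degree O(c·d); concretely, T' can be obtained by iteratively contracting maximal paths of vertices not in U into their nearest descendant in U, yielding maximum degree at most c·d + c. -/
open SimpleGraph Finset

/-- heap-style graph on `Fin n` with branching `b`: vertex `k ≠ 0` is joined to `(k-1)/b`. -/
def heapG (n b : ℕ) : SimpleGraph (Fin n) where
  Adj i j := ((j : ℕ) ≠ 0 ∧ ((j : ℕ) - 1) / b = (i : ℕ)) ∨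
             ((i : ℕ) ≠ 0 ∧ ((i : ℕ) - 1) / b = (j : ℕ))
  symm := ⟨fun i j h => h.symm⟩
  loopless := by
    constructor
    intro i h
    have hle : ((i : ℕ) - 1) / b ≤ (i : ℕ) - 1 := Nat.div_le_self _ _
    rcases h with ⟨h0, hp⟩ | ⟨h0, hp⟩ <;> omega

lemma heapG_walk {n b : ℕ} (hb : 1 ≤ b) (hn : 0 < n) :
    ∀ (d : ℕ) (k : Fin n), (k : ℕ) < ∑ i ∈ Finset.range (d + 1), b ^ i →
      ∃ w : (heapG n b).Walk ⟨0, hn⟩ k, w.length ≤ d := by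
  intro d
  induction d with
  | zero =>
    intro k hk
    have hk' : (k : ℕ) < 1 := by simpa using hk
    have : k = ⟨0, hn⟩ := by apply Fin.ext; simp; omega
    subst this
    exact ⟨SimpleGraph.Walk.nil, le_rfl⟩
  | succ d ih =>
    intro k hk
    by_cases hk0 : (k : ℕ) = 0
    · have : k = ⟨0, hn⟩ := by apply Fin.ext; simpa using hk0
      subst this
      exact ⟨SimpleGraph.Walk.nil, Nat.zero_le _⟩
    · have hjlt : ((k : ℕ) - 1) / b < n := by
        have := Nat.div_le_self ((k : ℕ) - 1) b
        have := k.isLt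
        omega
      have hsum : ∑ i ∈ Finset.range (d + 1 + 1), b ^ i
          = b * (∑ i ∈ Finset.range (d + 1), b ^ i) + 1 := by
        rw [Finset.sum_range_succ']
        simp [pow_succ, Finset.mul_sum, mul_comm]
      have h1 : (k : ℕ) - 1 < b * (∑ i ∈ Finset.range (d + 1), b ^ i) := by omega
      set j : Fin n := ⟨((k : ℕ) - 1) / b, hjlt⟩ with hj
      have hjb : (j : ℕ) < ∑ i ∈ Finset.range (d + 1), b ^ i :=
        Nat.div_lt_of_lt_mul h1
      obtain ⟨w, hw⟩ := ih j hjb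
      have hadj : (heapG n b).Adj j k := Or.inl ⟨hk0, rfl⟩
      exact ⟨w.concat hadj, by rw [SimpleGraph.Walk.length_concat]; omega⟩

lemma heapG_reachable {n b : ℕ} (hb : 1 ≤ b) (hn : 0 < n) (k : Fin n) :
    (heapG n b).Reachable ⟨0, hn⟩ k := by
  have hk : (k : ℕ) < ∑ i ∈ Finset.range ((k : ℕ) + 1), b ^ i := by
    calc (k : ℕ) < (k : ℕ) + 1 := Nat.lt_succ_self _
    _ = ∑ _i ∈ Finset.range ((k : ℕ) + 1), 1 := by simp
    _ ≤ ∑ i ∈ Finset.range ((k : ℕ) + 1), b ^ i :=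
        Finset.sum_le_sum fun i _ => Nat.one_le_pow _ _ hb
  obtain ⟨w, _⟩ := heapG_walk hb hn _ k hk
  exact w.reachable

lemma heapG_connected {n b : ℕ} (hb : 1 ≤ b) (hn : 0 < n) :
    (heapG n b).Connected := by
  haveI : Nonempty (Fin n) := ⟨⟨0, hn⟩⟩
  exact SimpleGraph.Connected.mk
    (fun u v => (heapG_reachable hb hn u).symm.trans (heapG_reachable hb hn v))

lemma walk_edge_getVert_mem {α : Type*} {G : SimpleGraph α} {u v : α} (p : G.Walk u v) :
    ∀ i, i < p.length → s(p.getVert i, p.getVert (i + 1)) ∈ p.edges := by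
  induction p with
  | nil => intro i h; simp at h
  | @cons a x c hadj q ih =>
    intro i h
    cases i with
    | zero =>
      simp only [SimpleGraph.Walk.getVert_zero, SimpleGraph.Walk.getVert_cons_succ,
        SimpleGraph.Walk.edges_cons]
      exact List.mem_cons_self
    | succ i =>
      simp only [SimpleGraph.Walk.getVert_cons_succ, SimpleGraph.Walk.edges_cons]
      refine List.mem_cons_of_mem _ (ih i ?_)
      simp only [SimpleGraph.Walk.length_cons] at h
      omega

lemma cycle_two_neighbors {α : Type*} {G : SimpleGraph α} {v : α} {c : G.Walk v v}
    (hc : c.IsCycle) :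
    ∃ x y, x ≠ y ∧ G.Adj v x ∧ G.Adj v y ∧ x ∈ c.support ∧ y ∈ c.support := by
  have h3 := hc.three_le_length
  cases c with
  | nil => exact absurd hc SimpleGraph.Walk.IsCycle.not_of_nil
  | @cons _ x _ h p =>
    rw [SimpleGraph.Walk.cons_isCycle_iff] at hc
    simp only [SimpleGraph.Walk.length_cons] at h3
    have hlp : 0 < p.length := by omega
    have hy_adj : G.Adj (p.getVert (p.length - 1)) v := by
      have := p.adj_getVert_succ (i := p.length - 1) (by omega)
      rwa [show p.length - 1 + 1 = p.length by omega, p.getVert_length] at this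
    have hedge : s(p.getVert (p.length - 1), v) ∈ p.edges := by
      have := walk_edge_getVert_mem p (p.length - 1) (by omega)
      rwa [show p.length - 1 + 1 = p.length by omega, p.getVert_length] at this
    have hne : p.getVert (p.length - 1) ≠ x := by
      intro he
      apply hc.2
      rw [he] at hedge
      rwa [Sym2.eq_swap]
    refine ⟨x, p.getVert (p.length - 1), fun hh => hne hh.symm, h, hy_adj.symm, ?_, ?_⟩
    · simp [SimpleGraph.Walk.support_cons]
    · rw [SimpleGraph.Walk.support_cons]
      refine List.mem_cons_of_mem _ ?_
      rw [SimpleGraph.Walk.mem_support_iff_exists_getVert]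
      exact ⟨p.length - 1, rfl, by omega⟩

lemma heapG_isAcyclic (n b : ℕ) : (heapG n b).IsAcyclic := by
  intro v c hc
  have hsne : c.support.toFinset.Nonempty :=
    ⟨v, by rw [List.mem_toFinset]; exact c.start_mem_support⟩
  set m := c.support.toFinset.max' hsne with hm
  have hmmem : m ∈ c.support := by
    have := c.support.toFinset.max'_mem hsne
    rwa [List.mem_toFinset] at this
  have hmax : ∀ z ∈ c.support, z ≤ m := fun z hz =>
    c.support.toFinset.le_max' z (List.mem_toFinset.mpr hz)
  have hc' := hc.rotate hmmem
  obtain ⟨x, y, hxy, hax, hay, hxs, hys⟩ := cycle_two_neighbors hc'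
  have hsupp : ∀ z ∈ (c.rotate m hmmem).support, z ≤ m := by
    intro z hz
    rw [SimpleGraph.Walk.support_eq_cons] at hz
    rcases List.mem_cons.mp hz with rfl | hz
    · exact le_rfl
    · have hperm := SimpleGraph.Walk.support_rotate c m hmmem
      exact hmax z (List.mem_of_mem_tail (hperm.mem_iff.mp hz))
  have key : ∀ z, (heapG n b).Adj m z → z ∈ (c.rotate m hmmem).support →
      (z : ℕ) = ((m : ℕ) - 1) / b := by
    intro z haz hzs
    rcases haz with ⟨hz0, hpz⟩ | ⟨hm0, hpm⟩
    · exfalso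
      have : ((z : ℕ) - 1) / b ≤ (z : ℕ) - 1 := Nat.div_le_self _ _
      have hzm : (z : ℕ) ≤ (m : ℕ) := hsupp z hzs
      omega
    · omega
  have hx := key x hax hxs
  have hy := key y hay hys
  exact hxy (Fin.ext (by omega))

lemma heapG_degree {n b : ℕ} (hb : 1 ≤ b) (k : Fin n) :
    ((heapG n b).neighborSet k).ncard ≤ b + 1 := by
  classical
  have hpar : ((k : ℕ) - 1) / b < n := by
    have := Nat.div_le_self ((k : ℕ) - 1) b
    have := k.isLt
    omega
  set f : ℕ → Fin n := fun r =>
    if r = 0 then ⟨((k : ℕ) - 1) / b, hpar⟩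
    else if h2 : b * (k : ℕ) + r < n then ⟨b * (k : ℕ) + r, h2⟩ else k with hf
  have hsub : (heapG n b).neighborSet k ⊆ ↑((Finset.range (b + 1)).image f) := by
    intro j hj
    simp only [Finset.coe_image, Set.mem_image, Finset.mem_coe, Finset.mem_range]
    rcases hj with ⟨hj0, hpj⟩ | ⟨hk0, hpk⟩
    · -- j is a child of k : (j-1)/b = k
      set r := ((j : ℕ) - 1) % b with hr
      have hdm := Nat.div_add_mod ((j : ℕ) - 1) b
      have hjval : (j : ℕ) = b * (k : ℕ) + (r + 1) := by
        rw [hpj] at hdm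
        omega
      refine ⟨r + 1, by have : r < b := Nat.mod_lt _ (by omega); omega, ?_⟩
      have hlt : b * (k : ℕ) + (r + 1) < n := hjval ▸ j.isLt
      simp only [hf]
      rw [if_neg (by omega), dif_pos hlt]
      exact Fin.ext hjval.symm
    · -- j is the parent of k
      refine ⟨0, by omega, ?_⟩
      simp only [hf, if_pos rfl]
      exact Fin.ext hpk
  calc ((heapG n b).neighborSet k).ncard
      ≤ (((Finset.range (b + 1)).image f : Finset (Fin n)) : Set (Fin n)).ncard :=
        Set.ncard_le_ncard hsub (Finset.finite_toSet _)
    _ = ((Finset.range (b + 1)).image f).card := Set.ncard_coe_finset _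
    _ ≤ (Finset.range (b + 1)).card := Finset.card_image_le
    _ = b + 1 := Finset.card_range _

lemma card_le_geom_sum {V : Type*} [Fintype V] (T : SimpleGraph V) (hconn : T.Connected)
    (root : V) (c d : ℕ)
    (hdeg : ∀ v : V, (T.neighborSet v).ncard ≤ c)
    (hdepth : ∀ v : V, T.dist root v ≤ d) :
    Fintype.card V ≤ ∑ i ∈ Finset.range (d + 1), c ^ i := by
  classical
  set S : ℕ → Finset V := fun i => Finset.univ.filter fun v => T.dist root v = i with hS
  have hstep : ∀ i, (S (i + 1)).card ≤ c * (S i).card := by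
    intro i
    have hsub : S (i + 1) ⊆ (S i).biUnion fun u => T.neighborFinset u := by
      intro v hv
      rw [hS, Finset.mem_filter] at hv
      have hdv : T.dist root v = i + 1 := hv.2
      obtain ⟨w, hw⟩ := (hconn root v).exists_walk_length_eq_dist
      have hnn : ¬ w.reverse.Nil := by
        rw [SimpleGraph.Walk.nil_iff_length_eq]
        rw [SimpleGraph.Walk.length_reverse, hw, hdv]
        omega
      obtain ⟨u, hadj, q, hq⟩ := SimpleGraph.Walk.not_nil_iff.mp hnn
      have hql : q.length = i := by
        have : w.reverse.length = q.length + 1 := by rw [hq]; simp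
        rw [SimpleGraph.Walk.length_reverse, hw, hdv] at this
        omega
      have hle : T.dist root u ≤ i := by
        have := T.dist_le q.reverse
        rwa [SimpleGraph.Walk.length_reverse, hql] at this
      have hge : i ≤ T.dist root u := by
        have htri := hconn.dist_triangle (u := root) (v := u) (w := v)
        have h1 : T.dist u v ≤ 1 := by
          have := T.dist_le hadj.symm.toWalk
          simpa using this
        omega
      rw [Finset.mem_biUnion]
      refine ⟨u, ?_, ?_⟩
      · rw [hS, Finset.mem_filter]; exact ⟨Finset.mem_univ _, by omega⟩
      · rw [SimpleGraph.mem_neighborFinset]; exact hadj.symm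
    calc (S (i + 1)).card ≤ ((S i).biUnion fun u => T.neighborFinset u).card :=
          Finset.card_le_card hsub
      _ ≤ ∑ u ∈ S i, (T.neighborFinset u).card := Finset.card_biUnion_le
      _ ≤ ∑ _u ∈ S i, c := Finset.sum_le_sum fun u _ => by
          have := hdeg u
          rwa [Set.ncard_eq_toFinset_card'] at this
      _ = c * (S i).card := by rw [Finset.sum_const, smul_eq_mul, mul_comm]
  have hcard : ∀ i, (S i).card ≤ c ^ i := by
    intro i
    induction i with
    | zero =>
      have : S 0 ⊆ {root} := by
        intro v hv
        rw [hS, Finset.mem_filter] at hv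
        rw [Finset.mem_singleton]
        exact ((hconn.dist_eq_zero_iff).mp hv.2).symm
      simpa using Finset.card_le_card this
    | succ i ih =>
      calc (S (i + 1)).card ≤ c * (S i).card := hstep i
        _ ≤ c * c ^ i := Nat.mul_le_mul_left c ih
        _ = c ^ (i + 1) := by rw [pow_succ, mul_comm]
  have huniv : (Finset.univ : Finset V) ⊆ (Finset.range (d + 1)).biUnion S := by
    intro v _
    rw [Finset.mem_biUnion]
    exact ⟨T.dist root v, Finset.mem_range.mpr (by have := hdepth v; omega),
      by rw [hS, Finset.mem_filter]; exact ⟨Finset.mem_univ _, rfl⟩⟩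
  calc Fintype.card V = (Finset.univ : Finset V).card := rfl
    _ ≤ ((Finset.range (d + 1)).biUnion S).card := Finset.card_le_card huniv
    _ ≤ ∑ i ∈ Finset.range (d + 1), (S i).card := Finset.card_biUnion_le
    _ ≤ ∑ i ∈ Finset.range (d + 1), c ^ i := Finset.sum_le_sum fun i _ => hcard i

theorem stmt15 {V : Type*} [Fintype V] (T : SimpleGraph V) (hT : T.IsTree) (root : V)
    (c d : ℕ)
    (hdeg : ∀ v : V, (T.neighborSet v).ncard ≤ c)
    (hdepth : ∀ v : V, T.dist root v ≤ d)
    (U : Set V) (hU : U.Nonempty) :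
    ∃ (T' : SimpleGraph U) (root' : U), T'.IsTree ∧
      (∀ u : U, T'.dist root' u ≤ d) ∧
      (∀ u : U, (T'.neighborSet u).ncard ≤ c * d + c) := by
  classical
  obtain ⟨u0, hu0⟩ := hU
  haveI : Nonempty U := ⟨⟨u0, hu0⟩⟩
  by_cases hss : ∀ x y : U, x = y
  · refine ⟨⊥, ⟨u0, hu0⟩, ⟨SimpleGraph.Connected.mk fun a b => by rw [hss a b], 
      SimpleGraph.isAcyclic_bot⟩, fun u => ?_, fun u => ?_⟩
    · rw [hss u ⟨u0, hu0⟩]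
      simp
    · have hset : ((⊥ : SimpleGraph U).neighborSet u) = ∅ := by
        ext z; simp [SimpleGraph.neighborSet]
      rw [hset, Set.ncard_empty]
      exact Nat.zero_le _
  · push_neg at hss
    obtain ⟨x, y, hxy⟩ := hss
    have hxyV : (x : V) ≠ (y : V) := fun h => hxy (Subtype.ext h)
    -- c ≥ 1
    have hc1 : 1 ≤ c := by
      obtain ⟨w⟩ := hT.isConnected.preconnected x y
      have hnn : ¬ w.Nil := SimpleGraph.Walk.not_nil_of_ne hxyV
      have hadj : T.Adj x (w.getVert 1) := SimpleGraph.Walk.adj_snd hnn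
      have h0 : 0 < (T.neighborSet (x : V)).ncard :=
        (Set.ncard_pos (Set.toFinite _)).mpr ⟨_, hadj⟩
      exact le_trans h0 (hdeg x)
    -- d ≥ 1
    have hd1 : 1 ≤ d := by
      by_cases hxr : (x : V) = root
      · have hyr : (y : V) ≠ root := fun h => hxyV (by rw [hxr, h])
        have := hT.isConnected.pos_dist_of_ne (u := root) (v := y) (Ne.symm hyr)
        have := hdepth y
        omega
      · have := hT.isConnected.pos_dist_of_ne (u := root) (v := x) (Ne.symm hxr)
        have := hdepth x
        omega
    have hcd : 1 * 1 ≤ c * d := Nat.mul_le_mul hc1 hd1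
    have hcd' : c * 1 ≤ c * d := Nat.mul_le_mul (le_refl c) hd1
    set b := c * d + c - 1 with hbdef
    have hb : 1 ≤ b := by omega
    have hbc : c ≤ b := by omega
    haveI : Fintype U := Fintype.ofFinite _
    set n := Fintype.card U with hndef
    have hn : 0 < n := Fintype.card_pos
    have hcap : n ≤ ∑ i ∈ Finset.range (d + 1), b ^ i := by
      calc n ≤ Fintype.card V := Fintype.card_le_of_embedding (Function.Embedding.subtype _)
        _ ≤ ∑ i ∈ Finset.range (d + 1), c ^ i :=
            card_le_geom_sum T hT.isConnected root c d hdeg hdepth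
        _ ≤ ∑ i ∈ Finset.range (d + 1), b ^ i :=
            Finset.sum_le_sum fun i _ => Nat.pow_le_pow_left hbc i
    set e : Fin n ≃ U := (Fintype.equivFin U).symm with he
    set Gh := heapG n b with hGh
    set T' : SimpleGraph U := SimpleGraph.comap (⇑e.symm) Gh with hT'
    set φ : Gh →g T' :=
      { toFun := e,
        map_rel' := fun {a b} h => by
          have h2 : Gh.Adj (e.symm (e a)) (e.symm (e b)) := by
            rw [Equiv.symm_apply_apply, Equiv.symm_apply_apply]; exact h
          exact h2 } with hφ
    have reach' : ∀ u : U, T'.Reachable (e ⟨0, hn⟩) u := fun u => by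
      have h := (heapG_reachable hb hn (e.symm u)).map φ
      rw [show φ (e.symm u) = u from Equiv.apply_symm_apply e u] at h
      exact h
    refine ⟨T', e ⟨0, hn⟩, ⟨SimpleGraph.Connected.mk
      (fun u v => (reach' u).symm.trans (reach' v)), ?_⟩, fun u => ?_, fun u => ?_⟩
    · -- acyclic
      intro v cyc hcy
      set ψ : T' →g Gh :=
        { toFun := e.symm, map_rel' := fun {a b} h => h } with hψ
      exact heapG_isAcyclic n b (cyc.map ψ) (hcy.map e.symm.injective)
    · -- distance
      have hlt : ((e.symm u : Fin n) : ℕ) < ∑ i ∈ Finset.range (d + 1), b ^ i :=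
        lt_of_lt_of_le (e.symm u).isLt hcap
      obtain ⟨w, hw⟩ := heapG_walk hb hn d (e.symm u) hlt
      have h2 := T'.dist_le (w.map φ)
      simp only [SimpleGraph.Walk.length_map] at h2
      rw [show φ (e.symm u) = u from Equiv.apply_symm_apply e u] at h2
      exact le_trans h2 hw
    · -- degree
      have him : T'.neighborSet u = e '' (Gh.neighborSet (e.symm u)) := by
        ext w
        constructor
        · intro h
          exact ⟨e.symm w, h, Equiv.apply_symm_apply e w⟩
        · rintro ⟨z, hz, rfl⟩
          show T'.Adj u (e z)
          simp only [hT', SimpleGraph.comap_adj, Equiv.symm_apply_apply]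
          exact hz
      rw [him, Set.ncard_image_of_injective _ e.injective]
      have hd2 : (Gh.neighborSet (e.symm u)).ncard ≤ b + 1 := heapG_degree hb (e.symm u)
      omega
end
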